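/- arXiv:2409.09676 — 6 statements merged into one kernel-verified Lean document; each statement's English description precedes it below -/
import Mathlib

section
/- For every real number λ > 0, every natural number t ≥ 1, and every natural number s with s < t, the left tail of the truncated shifted discrete Laplace distribution satisfies Σ_{c=0}^{s} f(c) ≤ exp(-(t - s)/λ), where f(c) = exp(-|c - t|/λ)/A and A = Σ_{c=0}^{2t} exp(-|c - t|/λ). -/
open Finset Real

/-- Left-tail bound for the truncated shifted discrete Laplace distribution:
for `1 ≤ t` and `s < t`, `Σ_{c=0}^{s} f(c) ≤ exp(-(t - s)/λ)`. -/
theorem tsdlap_left_tail (lam : ℝ) (hlam : 0 < lam) (t : ℕ) (ht : 1 ≤ t)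
    (s : ℕ) (hs : s < t) :
    ∑ c ∈ Finset.range (s + 1),
        Real.exp (-|(c : ℝ) - t| / lam) /
          (∑ c' ∈ Finset.range (2 * t + 1), Real.exp (-|(c' : ℝ) - t| / lam))
      ≤ Real.exp (-((t : ℝ) - s) / lam) := by
  set A := ∑ c' ∈ Finset.range (2 * t + 1), Real.exp (-|(c' : ℝ) - t| / lam) with hAdef
  have hApos : 0 < A :=
    Finset.sum_pos (fun i _ => Real.exp_pos _) ⟨0, by simp⟩
  rw [← Finset.sum_div, div_le_iff₀ hApos]
  have hst : s ≤ t := hs.le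
  have key : ∀ c ∈ Finset.range (s + 1),
      Real.exp (-|(c : ℝ) - t| / lam)
        = Real.exp (-((t : ℝ) - s) / lam) *
            Real.exp (-|((c + (t - s) : ℕ) : ℝ) - t| / lam) := by
    intro c hc
    have hcs : c ≤ s := Nat.lt_succ_iff.mp (Finset.mem_range.mp hc)
    rw [← Real.exp_add]
    congr 1
    have h1 : |(c : ℝ) - t| = (t : ℝ) - c := by
      rw [abs_sub_comm]
      exact abs_of_nonneg (sub_nonneg.mpr (by exact_mod_cast hcs.trans hst))
    have hcast : ((c + (t - s) : ℕ) : ℝ) = c + t - s := by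
      push_cast [Nat.cast_sub hst]; ring
    have h2 : |((c + (t - s) : ℕ) : ℝ) - t| = (s : ℝ) - c := by
      rw [hcast, show (c : ℝ) + t - s - t = -((s : ℝ) - c) by ring, abs_neg]
      exact abs_of_nonneg (sub_nonneg.mpr (by exact_mod_cast hcs))
    rw [h1, h2]
    field_simp
    try ring
  have hinj : Set.InjOn (· + (t - s)) ↑(Finset.range (s + 1)) := fun a _ b _ h => by
    simpa using h
  calc ∑ c ∈ Finset.range (s + 1), Real.exp (-|(c : ℝ) - t| / lam)
      = ∑ c ∈ Finset.range (s + 1),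
          Real.exp (-((t : ℝ) - s) / lam) *
            Real.exp (-|((c + (t - s) : ℕ) : ℝ) - t| / lam) := Finset.sum_congr rfl key
    _ = Real.exp (-((t : ℝ) - s) / lam) *
          ∑ c ∈ Finset.range (s + 1),
            Real.exp (-|((c + (t - s) : ℕ) : ℝ) - t| / lam) := by rw [Finset.mul_sum]
    _ ≤ Real.exp (-((t : ℝ) - s) / lam) * A := by
        refine mul_le_mul_of_nonneg_left ?_ (Real.exp_pos _).le
        have himg : ∑ j ∈ (Finset.range (s + 1)).image (· + (t - s)),
            Real.exp (-|(j : ℝ) - t| / lam)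
            = ∑ c ∈ Finset.range (s + 1),
                Real.exp (-|((c + (t - s) : ℕ) : ℝ) - t| / lam) := Finset.sum_image hinj
        rw [← himg]
        refine Finset.sum_le_sum_of_subset_of_nonneg ?_
          (fun i _ _ => (Real.exp_pos _).le)
        intro j hj
        simp only [Finset.mem_image, Finset.mem_range] at hj ⊢
        obtain ⟨c, hc, rfl⟩ := hj
        omega
end

section
/- For every real number λ > 0, every natural number t ≥ 1, and every natural number s with s < t, the right tail of the truncated shifted discrete Laplace distribution satisfies Σ_{c=2t-s}^{2t} f(c) ≤ exp(-(t - s)/λ), where f(c) = exp(-|c - t|/λ)/A and A = Σ_{c=0}^{2t} exp(-|c - t|/λ). -/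
open Finset Real

/-- Right-tail bound for the truncated shifted discrete Laplace distribution:
for `1 ≤ t` and `s < t`, `Σ_{c=2t-s}^{2t} f(c) ≤ exp(-(t - s)/λ)`. -/
theorem tsdlap_right_tail (lam : ℝ) (hlam : 0 < lam) (t : ℕ) (ht : 1 ≤ t)
    (s : ℕ) (hs : s < t) :
    ∑ c ∈ Finset.Icc (2 * t - s) (2 * t),
        Real.exp (-|(c : ℝ) - t| / lam) /
          (∑ c' ∈ Finset.range (2 * t + 1), Real.exp (-|(c' : ℝ) - t| / lam))
      ≤ Real.exp (-((t : ℝ) - s) / lam) := by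
  have hst : s ≤ t := hs.le
  have hs2t : s ≤ 2 * t := by omega
  set A := ∑ c' ∈ Finset.range (2 * t + 1), Real.exp (-|(c' : ℝ) - t| / lam) with hA
  have hApos : 0 < A := Finset.sum_pos (fun _ _ => Real.exp_pos _) ⟨0, by simp⟩
  rw [← Finset.sum_div, div_le_iff₀ hApos]
  set S := ∑ k ∈ Finset.range (s + 1), Real.exp (-(k : ℝ) / lam) with hS
  have hN : ∑ c ∈ Finset.Icc (2 * t - s) (2 * t), Real.exp (-|(c : ℝ) - t| / lam)
      = Real.exp (-((t : ℝ) - s) / lam) * S := by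
    rw [hS, Finset.mul_sum, ← Finset.Ico_add_one_right_eq_Icc, Finset.sum_Ico_eq_sum_range]
    have h1 : 2 * t + 1 - (2 * t - s) = s + 1 := by omega
    rw [h1]
    refine Finset.sum_congr rfl fun k hk => ?_
    have hk' : k ≤ s := by simpa [Nat.lt_succ_iff] using Finset.mem_range.mp hk
    have hc : ((2 * t - s + k : ℕ) : ℝ) = 2 * t - s + k := by
      push_cast [Nat.cast_sub hs2t]; ring
    have habs : |((2 * t - s + k : ℕ) : ℝ) - t| = (t : ℝ) - s + k := by
      rw [hc, abs_of_nonneg]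
      · ring
      · have : (s : ℝ) ≤ t := by exact_mod_cast hst
        have : (0:ℝ) ≤ (t : ℝ) - s + k := by
          have hk0 : (0:ℝ) ≤ (k:ℝ) := Nat.cast_nonneg k
          linarith
        linarith [this]
    rw [habs, ← Real.exp_add]
    congr 1
    field_simp
    ring
  have hSA : S ≤ A := by
    have hsub : Finset.Icc t (t + s) ⊆ Finset.range (2 * t + 1) := by
      intro c hc
      simp only [Finset.mem_Icc] at hc
      simp only [Finset.mem_range]
      omega
    have hle : S ≤ ∑ c ∈ Finset.Icc t (t + s), Real.exp (-|(c : ℝ) - t| / lam) := by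
      have : ∑ c ∈ Finset.Icc t (t + s), Real.exp (-|(c : ℝ) - t| / lam) = S := by
        rw [hS, ← Finset.Ico_add_one_right_eq_Icc, Finset.sum_Ico_eq_sum_range]
        have h1 : t + s + 1 - t = s + 1 := by omega
        rw [h1]
        refine Finset.sum_congr rfl fun k _ => ?_
        have h2 : ((t + k : ℕ) : ℝ) - t = (k : ℝ) := by push_cast; ring
        rw [h2, abs_of_nonneg (Nat.cast_nonneg k)]
      linarith [this]
    refine hle.trans ?_
    exact Finset.sum_le_sum_of_subset_of_nonneg hsub fun _ _ _ => (Real.exp_pos _).le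
  rw [hN]
  exact mul_le_mul_of_nonneg_left hSA (Real.exp_pos _).le
end

section
/- Let λ > 0 be real, δ ∈ (0, 1), and Δ ≥ 1 a natural number. If t is a natural number with t ≥ Δ + λ·log(2/δ) and Δ ≤ t, then the truncated shifted discrete Laplace distribution places mass at most δ/2 on each extreme region: Σ_{c=0}^{Δ-1} f(c) ≤ δ/2 and Σ_{c=2t-Δ+1}^{2t} f(c) ≤ δ/2, where f(c) = exp(-|c - t|/λ)/A and A = Σ_{c=0}^{2t} exp(-|c - t|/λ). -/
open Finset Real

/-!
Both tails are controlled by the left one, because the weights are symmetric under `c ↦ 2t - c`.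
Shifting the left window `{0, …, Δ-1}` right by `t - Δ` multiplies every weight by
`exp ((t - Δ) / λ)`, since the window stays left of the centre `t`; the shifted window lies inside
`{0, …, 2t}`, so the left tail has mass at most `exp (-(t - Δ) / λ)`, which is at most `δ / 2`
precisely when `t - Δ ≥ λ log (2 / δ)`.
-/

noncomputable def tsdlapWeight (lam : ℝ) (t c : ℕ) : ℝ := exp (-|(c : ℝ) - t| / lam)

noncomputable def tsdlap (lam : ℝ) (t c : ℕ) : ℝ :=
  tsdlapWeight lam t c / ∑ c' ∈ range (2 * t + 1), tsdlapWeight lam t c'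

section

variable (lam : ℝ) (t : ℕ)

lemma tsdlapWeight_pos (c : ℕ) : 0 < tsdlapWeight lam t c := exp_pos _

lemma tsdlapWeight_reflect {c : ℕ} (hc : c ≤ 2 * t) :
    tsdlapWeight lam t (2 * t - c) = tsdlapWeight lam t c := by
  unfold tsdlapWeight
  rw [Nat.cast_sub hc, ← abs_neg]
  push_cast
  ring_nf

lemma tsdlapWeight_eq_exp_mul_add {c k : ℕ} (h : c + k ≤ t) :
    tsdlapWeight lam t c = exp (-(k : ℝ) / lam) * tsdlapWeight lam t (c + k) := by
  have h' : (c : ℝ) + k ≤ t := by exact_mod_cast h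
  unfold tsdlapWeight
  rw [← exp_add, abs_of_nonpos (by linarith), abs_of_nonpos (by push_cast; linarith)]
  push_cast
  ring_nf

lemma sum_range_tsdlapWeight_le {Δ : ℕ} (hΔt : Δ ≤ t) :
    ∑ c ∈ range Δ, tsdlapWeight lam t c ≤
      exp (-((t : ℝ) - Δ) / lam) * ∑ c ∈ range (2 * t + 1), tsdlapWeight lam t c := by
  have hshift : ∑ c ∈ range Δ, tsdlapWeight lam t c =
      exp (-((t - Δ : ℕ) : ℝ) / lam) * ∑ c ∈ Ico (t - Δ) t, tsdlapWeight lam t c := by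
    rw [sum_Ico_eq_sum_range, Nat.sub_sub_self hΔt, mul_sum]
    refine sum_congr rfl fun c hc => ?_
    rw [add_comm (t - Δ)]
    exact tsdlapWeight_eq_exp_mul_add lam t (by rw [mem_range] at hc; omega)
  rw [hshift, Nat.cast_sub hΔt]
  gcongr
  · exact fun c _ _ => (tsdlapWeight_pos lam t c).le
  · intro c hc
    rw [mem_Ico] at hc
    rw [mem_range]
    omega

lemma sum_range_tsdlap_le {Δ : ℕ} (hΔt : Δ ≤ t) :
    ∑ c ∈ range Δ, tsdlap lam t c ≤ exp (-((t : ℝ) - Δ) / lam) := by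
  have hZ : 0 < ∑ c ∈ range (2 * t + 1), tsdlapWeight lam t c :=
    sum_pos (fun c _ => tsdlapWeight_pos lam t c) nonempty_range_add_one
  unfold tsdlap
  rw [← sum_div, div_le_iff₀ hZ]
  exact sum_range_tsdlapWeight_le lam t hΔt

lemma sum_Icc_tsdlap_eq_sum_range {Δ : ℕ} (hΔ : Δ ≤ 2 * t) :
    ∑ c ∈ Icc (2 * t - Δ + 1) (2 * t), tsdlap lam t c = ∑ c ∈ range Δ, tsdlap lam t c := by
  refine sum_nbij' (2 * t - ·) (2 * t - ·) ?_ ?_ ?_ ?_ ?_ <;> intro c hc <;>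
    simp only [mem_Icc, mem_range] at hc ⊢
  · omega
  · omega
  · omega
  · omega
  · unfold tsdlap
    rw [tsdlapWeight_reflect lam t (by omega)]

end

lemma exp_neg_div_le_half {lam δ s : ℝ} (hlam : 0 < lam) (hδ : 0 < δ)
    (hs : lam * log (2 / δ) ≤ s) : exp (-s / lam) ≤ δ / 2 := by
  rw [← le_log_iff_exp_le (by positivity), ← inv_div 2 δ, log_inv, neg_div, neg_le_neg_iff,
    le_div_iff₀ hlam]
  linarith

theorem tsdlap_extreme_mass_general (lam : ℝ) (hlam : 0 < lam) (δ : ℝ)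
    (hδ : δ ∈ Set.Ioo (0 : ℝ) 1) (Δ : ℕ) (t : ℕ)
    (ht : (Δ : ℝ) + lam * Real.log (2 / δ) ≤ t) (hΔt : Δ ≤ t) :
    (∑ c ∈ Finset.range Δ,
        Real.exp (-|(c : ℝ) - t| / lam) /
          (∑ c' ∈ Finset.range (2 * t + 1), Real.exp (-|(c' : ℝ) - t| / lam))
      ≤ δ / 2) ∧
    (∑ c ∈ Finset.Icc (2 * t - Δ + 1) (2 * t),
        Real.exp (-|(c : ℝ) - t| / lam) /
          (∑ c' ∈ Finset.range (2 * t + 1), Real.exp (-|(c' : ℝ) - t| / lam))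
      ≤ δ / 2) := by
  have hleft : ∑ c ∈ range Δ, tsdlap lam t c ≤ δ / 2 :=
    (sum_range_tsdlap_le lam t hΔt).trans (exp_neg_div_le_half hlam hδ.1 (by linarith))
  exact ⟨hleft, (sum_Icc_tsdlap_eq_sum_range lam t (by omega)).trans_le hleft⟩

/-- If `t ≥ Δ + λ·log(2/δ)` and `Δ ≤ t`, the truncated shifted discrete Laplace
distribution places mass at most `δ/2` on each extreme region
`{0, …, Δ-1}` and `{2t-Δ+1, …, 2t}`. -/
theorem tsdlap_extreme_mass (lam : ℝ) (hlam : 0 < lam) (δ : ℝ)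
    (hδ : δ ∈ Set.Ioo (0 : ℝ) 1) (Δ : ℕ) (hΔ : 1 ≤ Δ) (t : ℕ)
    (ht : (Δ : ℝ) + lam * Real.log (2 / δ) ≤ t) (hΔt : Δ ≤ t) :
    (∑ c ∈ Finset.range Δ,
        Real.exp (-|(c : ℝ) - t| / lam) /
          (∑ c' ∈ Finset.range (2 * t + 1), Real.exp (-|(c' : ℝ) - t| / lam))
      ≤ δ / 2) ∧
    (∑ c ∈ Finset.Icc (2 * t - Δ + 1) (2 * t),
        Real.exp (-|(c : ℝ) - t| / lam) /
          (∑ c' ∈ Finset.range (2 * t + 1), Real.exp (-|(c' : ℝ) - t| / lam))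
      ≤ δ / 2) :=
  tsdlap_extreme_mass_general lam hlam δ hδ Δ t ht hΔt
end

section
/- (Chernoff–Hoeffding bound for the binomial upper tail.) Let k be a natural number and p, q real numbers with 0 < p < q < 1. Then the probability that a Binomial(k, p) random variable is at least k·q satisfies Σ_{v : ℕ, k·q ≤ v ≤ k} C(k, v)·p^{v}·(1 - p)^{k - v} ≤ exp(-k·D(q‖p)), where D(q‖p) = q·log(q/p) + (1 - q)·log((1 - q)/(1 - p)) is the Kullback–Leibler divergence between Bernoulli(q) and Bernoulli(p). -/
open Finset Real

/-- Chernoff–Hoeffding bound for the binomial upper tail: for `0 < p < q < 1`,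
`Σ_{v : k·q ≤ v ≤ k} C(k,v)·p^v·(1-p)^{k-v} ≤ exp(-k·D(q‖p))`, where
`D(q‖p) = q·log(q/p) + (1-q)·log((1-q)/(1-p))`. -/
theorem binomial_chernoff_hoeffding (k : ℕ) (p q : ℝ)
    (hp : 0 < p) (hpq : p < q) (hq : q < 1) :
    ∑ v ∈ (Finset.range (k + 1)).filter
        (fun v : ℕ => (k : ℝ) * q ≤ (v : ℝ)),
        (k.choose v : ℝ) * p ^ v * (1 - p) ^ (k - v)
      ≤ Real.exp (-(k : ℝ) *
          (q * Real.log (q / p) + (1 - q) * Real.log ((1 - q) / (1 - p)))) := by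
  have hq0 : 0 < q := hp.trans hpq
  have h1q : 0 < 1 - q := by linarith
  have h1p : 0 < 1 - p := by linarith
  set r : ℝ := q * (1 - p) / (p * (1 - q)) with hr_def
  have hr0 : 0 < r := by positivity
  have hr1 : 1 ≤ r := by
    rw [hr_def, le_div_iff₀ (by positivity)]
    nlinarith
  have hterm_nonneg : ∀ v : ℕ, 0 ≤ (k.choose v : ℝ) * p ^ v * (1 - p) ^ (k - v) := by
    intro v; positivity
  -- Step 1: insert tilting factor
  have step1 : ∑ v ∈ (Finset.range (k + 1)).filter
        (fun v : ℕ => (k : ℝ) * q ≤ (v : ℝ)),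
        (k.choose v : ℝ) * p ^ v * (1 - p) ^ (k - v)
      ≤ ∑ v ∈ (Finset.range (k + 1)).filter
        (fun v : ℕ => (k : ℝ) * q ≤ (v : ℝ)),
        r ^ ((v : ℝ) - (k : ℝ) * q) * ((k.choose v : ℝ) * p ^ v * (1 - p) ^ (k - v)) := by
    apply Finset.sum_le_sum
    intro v hv
    rw [Finset.mem_filter] at hv
    have h1 : (1 : ℝ) ≤ r ^ ((v : ℝ) - (k : ℝ) * q) :=
      Real.one_le_rpow hr1 (by linarith [hv.2])
    nlinarith [hterm_nonneg v, h1]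
  -- Step 2: extend to full range
  have step2 : ∑ v ∈ (Finset.range (k + 1)).filter
        (fun v : ℕ => (k : ℝ) * q ≤ (v : ℝ)),
        r ^ ((v : ℝ) - (k : ℝ) * q) * ((k.choose v : ℝ) * p ^ v * (1 - p) ^ (k - v))
      ≤ ∑ v ∈ Finset.range (k + 1),
        r ^ ((v : ℝ) - (k : ℝ) * q) * ((k.choose v : ℝ) * p ^ v * (1 - p) ^ (k - v)) := by
    apply Finset.sum_le_sum_of_subset_of_nonneg (Finset.filter_subset _ _)
    intro v _ _
    have := hterm_nonneg v
    positivity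
  -- Step 3: evaluate the full sum by the binomial theorem
  have step3 : ∑ v ∈ Finset.range (k + 1),
        r ^ ((v : ℝ) - (k : ℝ) * q) * ((k.choose v : ℝ) * p ^ v * (1 - p) ^ (k - v))
      = r ^ (-((k : ℝ) * q)) * (p * r + (1 - p)) ^ k := by
    rw [add_pow, Finset.mul_sum]
    apply Finset.sum_congr rfl
    intro v hv
    have h1 : r ^ ((v : ℝ) - (k : ℝ) * q)
        = r ^ (v : ℕ) * r ^ (-((k : ℝ) * q)) := by
      rw [sub_eq_add_neg, Real.rpow_add hr0, Real.rpow_natCast]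
    rw [h1, mul_pow]
    ring
  have hkey : p * r + (1 - p) = (1 - p) / (1 - q) := by
    rw [hr_def]
    field_simp
    ring
  -- Step 4: rewrite as an exponential
  have step4 : r ^ (-((k : ℝ) * q)) * (p * r + (1 - p)) ^ k
      = Real.exp (-(k : ℝ) *
          (q * Real.log (q / p) + (1 - q) * Real.log ((1 - q) / (1 - p)))) := by
    rw [hkey]
    have h1 : r ^ (-((k : ℝ) * q)) = Real.exp (Real.log r * (-((k : ℝ) * q))) :=
      Real.rpow_def_of_pos hr0 _
    have h2 : ((1 - p) / (1 - q)) ^ k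
        = Real.exp ((k : ℝ) * Real.log ((1 - p) / (1 - q))) := by
      rw [Real.exp_nat_mul, Real.exp_log (by positivity)]
    rw [h1, h2, ← Real.exp_add]
    congr 1
    have hlr : Real.log r = Real.log q + Real.log (1 - p) - Real.log p - Real.log (1 - q) := by
      rw [hr_def, Real.log_div (by positivity) (by positivity),
        Real.log_mul (ne_of_gt hq0) (ne_of_gt h1p),
        Real.log_mul (ne_of_gt hp) (ne_of_gt h1q)]
      ring
    rw [hlr, Real.log_div (ne_of_gt h1p) (ne_of_gt h1q),
      Real.log_div (ne_of_gt hq0) (ne_of_gt hp),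
      Real.log_div (ne_of_gt h1q) (ne_of_gt h1p)]
    ring
  calc _ ≤ _ := step1
    _ ≤ _ := step2
    _ = _ := step3
    _ = _ := step4
end

section
/- Let k and τ be natural numbers and p, q real numbers with 0 < p < q < 1, and suppose τ ≤ k·q. Then Σ_{v : ℕ, k·q ≤ v ≤ k} C(k, v)·p^{v}·(1 - p)^{k - v} ≤ exp(-(τ/q)·D(q‖p)), where D(q‖p) = q·log(q/p) + (1 - q)·log((1 - q)/(1 - p)). -/
/-!
Exponential tilting: for `t ≥ 0`, on the event `v ≥ x` every binomial weight is at most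
`e^{t(v - x)}` times itself, and the tilted weights sum to `(p eᵗ + 1 - p)ᵏ`. The choice
`eᵗ = (q/p) / ((1-q)/(1-p))` makes this bound `exp(-k D(q‖p))`, and `D(q‖p) ≥ 0` together with
`τ/q ≤ k` weakens it to the stated one.
-/

open Finset Real InformationTheory

noncomputable def bernoulliKL (q p : ℝ) : ℝ :=
  q * log (q / p) + (1 - q) * log ((1 - q) / (1 - p))

theorem bernoulliKL_eq_klFun {p q : ℝ} (hp : 0 < p) (hp1 : p < 1) :
    bernoulliKL q p = p * klFun (q / p) + (1 - p) * klFun ((1 - q) / (1 - p)) := by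
  have hp1' : (1 - p) ≠ 0 := by linarith
  simp only [bernoulliKL, klFun]
  field_simp
  ring

theorem bernoulliKL_nonneg {p q : ℝ} (hp : 0 < p) (hp1 : p < 1) (hq : 0 ≤ q) (hq1 : q ≤ 1) :
    0 ≤ bernoulliKL q p := by
  rw [bernoulliKL_eq_klFun hp hp1]
  have h1p : 0 < 1 - p := by linarith
  have := klFun_nonneg (div_nonneg hq hp.le)
  have := klFun_nonneg (div_nonneg (sub_nonneg.2 hq1) h1p.le)
  positivity

theorem binomial_upper_tail_le_mul_pow {p t : ℝ} (hp : 0 ≤ p) (hp1 : p ≤ 1) (ht : 0 ≤ t)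
    (k : ℕ) (x : ℝ) :
    ∑ v ∈ (range (k + 1)).filter (fun v : ℕ => x ≤ v),
        (k.choose v : ℝ) * p ^ v * (1 - p) ^ (k - v)
      ≤ exp (-(t * x)) * (p * exp t + (1 - p)) ^ k := by
  have h1p : 0 ≤ 1 - p := by linarith
  have tilt : ∀ v : ℕ, x ≤ v → (k.choose v : ℝ) * p ^ v * (1 - p) ^ (k - v)
      ≤ exp (-(t * x)) * ((p * exp t) ^ v * (1 - p) ^ (k - v) * k.choose v) := by
    intro v hv
    have hexp : exp (t * x) ≤ exp t ^ v := by
      rw [← exp_nat_mul, exp_le_exp]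
      nlinarith
    rw [exp_neg, ← div_eq_inv_mul, le_div_iff₀ (exp_pos _), mul_pow]
    calc (k.choose v : ℝ) * p ^ v * (1 - p) ^ (k - v) * exp (t * x)
        ≤ (k.choose v : ℝ) * p ^ v * (1 - p) ^ (k - v) * exp t ^ v := by gcongr
      _ = _ := by ring
  calc _ ≤ ∑ v ∈ (range (k + 1)).filter (fun v : ℕ => x ≤ v),
          exp (-(t * x)) * ((p * exp t) ^ v * (1 - p) ^ (k - v) * k.choose v) :=
        sum_le_sum fun v hv => tilt v (mem_filter.1 hv).2
    _ ≤ ∑ v ∈ range (k + 1),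
          exp (-(t * x)) * ((p * exp t) ^ v * (1 - p) ^ (k - v) * k.choose v) :=
        sum_le_sum_of_subset_of_nonneg (filter_subset _ _) fun _ _ _ => by positivity
    _ = exp (-(t * x)) * (p * exp t + (1 - p)) ^ k := by rw [← mul_sum, ← add_pow]

theorem binomial_upper_tail_le_exp_bernoulliKL {p q : ℝ} (hp : 0 < p) (hpq : p ≤ q)
    (hq : q < 1) (k : ℕ) :
    ∑ v ∈ (range (k + 1)).filter (fun v : ℕ => k * q ≤ v),
        (k.choose v : ℝ) * p ^ v * (1 - p) ^ (k - v)
      ≤ exp (-(k * bernoulliKL q p)) := by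
  have hq0 : 0 < q := hp.trans_le hpq
  have h1q : 0 < 1 - q := by linarith
  have h1p : 0 < 1 - p := by linarith
  set L := log ((1 - q) / (1 - p))
  set t := log (q / p) - L
  have ht : 0 ≤ t := by
    have h1 : (1 - q) / (1 - p) ≤ 1 := (div_le_one h1p).2 (by linarith)
    have h2 : 1 ≤ q / p := (one_le_div hp).2 hpq
    have := log_nonpos (by positivity) h1
    have := log_nonneg h2
    linarith
  have hexpL : exp L = (1 - q) / (1 - p) := exp_log (by positivity)
  have hmgf : p * exp t + (1 - p) = exp (-L) := by
    rw [exp_sub, exp_neg, hexpL, exp_log (by positivity)]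
    field_simp
    ring
  calc _ ≤ exp (-(t * (k * q))) * (p * exp t + (1 - p)) ^ k :=
        binomial_upper_tail_le_mul_pow hp.le (by linarith) ht k _
    _ = exp (-(k * bernoulliKL q p)) := by
      rw [hmgf, ← exp_nat_mul, ← exp_add, bernoulliKL]
      congr 1
      ring

/-- If `τ ≤ k·q` and `0 < p < q < 1`, then the binomial upper tail satisfies
`Σ_{v : k·q ≤ v ≤ k} C(k,v)·p^v·(1-p)^{k-v} ≤ exp(-(τ/q)·D(q‖p))`. -/
theorem binomial_tail_threshold_bound (k τ : ℕ) (p q : ℝ)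
    (hp : 0 < p) (hpq : p < q) (hq : q < 1) (hτ : (τ : ℝ) ≤ (k : ℝ) * q) :
    ∑ v ∈ (Finset.range (k + 1)).filter
        (fun v : ℕ => (k : ℝ) * q ≤ (v : ℝ)),
        (k.choose v : ℝ) * p ^ v * (1 - p) ^ (k - v)
      ≤ Real.exp (-((τ : ℝ) / q) *
          (q * Real.log (q / p) + (1 - q) * Real.log ((1 - q) / (1 - p)))) := by
  have hq0 : 0 < q := hp.trans hpq
  have hD : 0 ≤ bernoulliKL q p := bernoulliKL_nonneg hp (hpq.trans hq) hq0.le hq.le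
  have hτk : (τ : ℝ) / q ≤ k := (div_le_iff₀ hq0).2 hτ
  calc _ ≤ exp (-(k * bernoulliKL q p)) := binomial_upper_tail_le_exp_bernoulliKL hp hpq.le hq k
    _ ≤ exp (-(τ / q) * bernoulliKL q p) := by
      rw [exp_le_exp, neg_mul, neg_le_neg_iff]
      exact mul_le_mul_of_nonneg_right hτk hD
end

section
/- (Utility of the sample-and-threshold mechanism.) Let W be a natural number, p a real number with 0 < p < 1, and τ a natural number with τ ≤ p·W. If each of W clients holding a common value independently participates with probability p, then the probability that fewer than τ sampled copies of the value appear (so the value is removed by thresholding) satisfies Σ_{v=0}^{τ-1} C(W, v)·p^{v}·(1 - p)^{W - v} ≤ exp(-(p·W - τ)²/(2·W·p)). -/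
/-!
Chernoff's method. For `t ≥ 0` the indicator of `{v < τ}` is dominated by `exp (t (τ - v))`, so by
the binomial theorem the lower tail is at most `exp (t τ) (p e^{-t} + 1 - p)^W ≤ exp (t τ + W p (e^{-t} - 1))`.
Bounding `e^{-t} ≤ 1 - t + t²/2` makes the exponent a quadratic in `t`, minimised at
`t = (pW - τ)/(pW)`, where it equals `-(pW - τ)²/(2Wp)`.
-/

open Finset Real

-- `(1 - t + t²/2)(1 + t + t²/2) = 1 + t⁴/4 ≥ 1`.
lemma exp_neg_le_one_sub_add_sq_div_two {t : ℝ} (ht : 0 ≤ t) :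
    exp (-t) ≤ 1 - t + t ^ 2 / 2 := by
  have hpos : 0 < 1 + t + t ^ 2 / 2 := by positivity
  calc exp (-t) = (exp t)⁻¹ := exp_neg t
    _ ≤ (1 + t + t ^ 2 / 2)⁻¹ := inv_anti₀ hpos (quadratic_le_exp_of_nonneg ht)
    _ ≤ 1 - t + t ^ 2 / 2 := by
      rw [inv_le_iff_one_le_mul₀' hpos]
      nlinarith [sq_nonneg (t ^ 2)]

lemma one_add_pow_le_exp_mul {x : ℝ} (hx : -1 ≤ x) (n : ℕ) : (1 + x) ^ n ≤ exp (n * x) := by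
  rw [exp_nat_mul]
  exact pow_le_pow_left₀ (by linarith) (by linarith [add_one_le_exp x]) n

lemma sum_range_choose_mul_pow_le_exp_mul (W τ : ℕ) {p q t : ℝ} (hp : 0 ≤ p) (hq : 0 ≤ q)
    (ht : 0 ≤ t) :
    ∑ v ∈ range τ, (W.choose v : ℝ) * p ^ v * q ^ (W - v)
      ≤ exp (t * τ) * (p * exp (-t) + q) ^ W := by
  set b : ℕ → ℝ := fun v ↦ (W.choose v : ℝ) * p ^ v * q ^ (W - v) with hb_def
  have hb : ∀ v, 0 ≤ b v := fun v ↦ by positivity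
  calc ∑ v ∈ range τ, b v
      ≤ ∑ v ∈ range τ, exp (t * (τ - v)) * b v := by
        refine sum_le_sum fun v hv ↦ le_mul_of_one_le_left (hb v) (one_le_exp ?_)
        have : (v : ℝ) < τ := by exact_mod_cast mem_range.mp hv
        exact mul_nonneg ht (by linarith)
    _ ≤ ∑ v ∈ range (max τ (W + 1)), exp (t * (τ - v)) * b v :=
        sum_le_sum_of_subset_of_nonneg (range_subset_range.2 (le_max_left _ _))
          fun v _ _ ↦ mul_nonneg (exp_pos _).le (hb v)
    _ = ∑ v ∈ range (W + 1), exp (t * (τ - v)) * b v := by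
        refine (sum_subset (range_subset_range.2 (le_max_right _ _)) fun v _ hv ↦ ?_).symm
        have hWv : W < v := by simpa using hv
        simp [hb_def, Nat.choose_eq_zero_of_lt hWv]
    _ = exp (t * τ) * (p * exp (-t) + q) ^ W := by
        rw [add_pow, mul_sum]
        refine sum_congr rfl fun v _ ↦ ?_
        rw [show exp (t * (τ - v)) = exp (t * τ) * exp (-t) ^ v by
          rw [← exp_nat_mul, ← exp_add]; ring_nf]
        ring

lemma sum_range_binomial_le_exp (W τ : ℕ) {p t : ℝ} (hp0 : 0 ≤ p) (hp1 : p ≤ 1) (ht : 0 ≤ t) :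
    ∑ v ∈ range τ, (W.choose v : ℝ) * p ^ v * (1 - p) ^ (W - v)
      ≤ exp (t * τ - W * p * (t - t ^ 2 / 2)) := by
  have hexp : exp (-t) ≤ 1 := exp_le_one_iff.mpr (by linarith)
  have hquad := exp_neg_le_one_sub_add_sq_div_two ht
  calc ∑ v ∈ range τ, (W.choose v : ℝ) * p ^ v * (1 - p) ^ (W - v)
      ≤ exp (t * τ) * (1 + p * (exp (-t) - 1)) ^ W := by
        convert sum_range_choose_mul_pow_le_exp_mul W τ hp0 (sub_nonneg.2 hp1) ht using 3
        ring
    _ ≤ exp (t * τ) * exp (W * (p * (exp (-t) - 1))) := by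
        gcongr
        exact one_add_pow_le_exp_mul (by nlinarith [exp_pos (-t)]) W
    _ ≤ exp (t * τ) * exp (W * (p * (-t + t ^ 2 / 2))) := by
        gcongr
        linarith
    _ = exp (t * τ - W * p * (t - t ^ 2 / 2)) := by
        rw [← exp_add]; ring_nf

theorem sample_threshold_utility_general (W : ℕ) (p : ℝ) (hp1 : p < 1)
    (τ : ℕ) (hτ : (τ : ℝ) ≤ p * W) :
    ∑ v ∈ Finset.range τ, (W.choose v : ℝ) * p ^ v * (1 - p) ^ (W - v)
      ≤ Real.exp (-(p * W - τ) ^ 2 / (2 * W * p)) := by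
  rcases Nat.eq_zero_or_pos τ with rfl | hτ0
  · simpa using (exp_pos _).le
  have hpW : 0 < p * W := lt_of_lt_of_le (by exact_mod_cast hτ0) hτ
  have hp0 : 0 < p := pos_of_mul_pos_left hpW (Nat.cast_nonneg W)
  set t := (p * W - τ) / (p * W) with ht_def
  have ht : 0 ≤ t := div_nonneg (by linarith) hpW.le
  calc ∑ v ∈ range τ, (W.choose v : ℝ) * p ^ v * (1 - p) ^ (W - v)
      ≤ exp (t * τ - W * p * (t - t ^ 2 / 2)) := sum_range_binomial_le_exp W τ hp0.le hp1.le ht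
    _ = exp (-(p * W - τ) ^ 2 / (2 * W * p)) := by
        rw [ht_def]
        congr 1
        field_simp
        ring

/-- Utility of the sample-and-threshold mechanism: if each of `W` clients
holding a common value participates independently with probability `p`, and
`τ ≤ p·W`, the probability that fewer than `τ` sampled copies appear is at most
`exp(-(p·W - τ)²/(2·W·p))`. -/
theorem sample_threshold_utility (W : ℕ) (p : ℝ) (hp0 : 0 < p) (hp1 : p < 1)
    (τ : ℕ) (hτ : (τ : ℝ) ≤ p * W) :
    ∑ v ∈ Finset.range τ, (W.choose v : ℝ) * p ^ v * (1 - p) ^ (W - v)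
      ≤ Real.exp (-(p * W - τ) ^ 2 / (2 * W * p)) :=
  sample_threshold_utility_general W p hp1 τ hτ
end
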